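/- Let X be a finite subset of ℝ^d, let p be a distribution on X such that S(p) = Σ_{x∈X} p_x x xᵀ is invertible, and let x̂ ∈ X satisfy p_{x̂} ≥ 1/2. Then x̂ᵀ S(p)^{-1} x̂ ≤ 2. -/

import Mathlib

open Finset

/-- `Smat X p` is the matrix `S(p) = ∑_{x ∈ X} p_x · x xᵀ`. -/
noncomputable def Smat {d : ℕ} (X : Finset (Fin d → ℝ)) (p : (Fin d → ℝ) → ℝ) :
    Matrix (Fin d) (Fin d) ℝ :=
  ∑ x ∈ X, p x • Matrix.vecMulVec x x

/-- `p` is a probability distribution on the finite set `X`. -/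
def IsDistOn {d : ℕ} (X : Finset (Fin d → ℝ)) (p : (Fin d → ℝ) → ℝ) : Prop :=
  (∀ x ∈ X, 0 ≤ p x) ∧ ∑ x ∈ X, p x = 1

/-!
With `v = S(p)⁻¹ x̂` and `q = x̂ᵀ v`, the quadratic form of `S(p)` at `v` is both
`vᵀ S(p) v = vᵀ x̂ = q` and `∑ₓ pₓ (xᵀ v)² ≥ p_{x̂} q² ≥ q² / 2`; hence `q² ≤ 2 q`, i.e. `q ≤ 2`.
-/

open Matrix

section

variable {d : ℕ} {X : Finset (Fin d → ℝ)} {p : (Fin d → ℝ) → ℝ}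

theorem dotProduct_Smat_mulVec (v : Fin d → ℝ) :
    v ⬝ᵥ (Smat X p *ᵥ v) = ∑ x ∈ X, p x * (x ⬝ᵥ v) ^ 2 := by
  simp only [Smat, sum_mulVec, dotProduct_sum, smul_mulVec,
    vecMulVec_mulVec, op_smul_eq_smul, dotProduct_smul, smul_eq_mul]
  refine sum_congr rfl fun x _ => ?_
  rw [dotProduct_comm v x]
  ring

theorem mul_sq_le_dotProduct_Smat_mulVec (hp : ∀ x ∈ X, 0 ≤ p x) {x : Fin d → ℝ}
    (hx : x ∈ X) (v : Fin d → ℝ) :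
    p x * (x ⬝ᵥ v) ^ 2 ≤ v ⬝ᵥ (Smat X p *ᵥ v) := by
  rw [dotProduct_Smat_mulVec]
  exact single_le_sum (f := fun y => p y * (y ⬝ᵥ v) ^ 2)
    (fun y hy => mul_nonneg (hp y hy) (sq_nonneg _)) hx

end

/-- if `p` is a distribution on `X` with `S(p)` invertible and
`p_{x̂} ≥ 1/2`, then `x̂ᵀ S(p)⁻¹ x̂ ≤ 2`. -/
theorem quad_form_le_two_of_half_mass {d : ℕ} (X : Finset (Fin d → ℝ))
    (p : (Fin d → ℝ) → ℝ) (hp : IsDistOn X p) (hpu : IsUnit (Smat X p))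
    (xhat : Fin d → ℝ) (hxhat : xhat ∈ X) (hhalf : 1 / 2 ≤ p xhat) :
    dotProduct xhat ((Smat X p)⁻¹.mulVec xhat) ≤ 2 := by
  set v := (Smat X p)⁻¹ *ᵥ xhat
  have hSv : Smat X p *ᵥ v = xhat := by
    rw [mulVec_mulVec, mul_nonsing_inv _ ((isUnit_iff_isUnit_det _).mp hpu),
      one_mulVec]
  have hq : p xhat * (xhat ⬝ᵥ v) ^ 2 ≤ xhat ⬝ᵥ v := by
    simpa only [hSv, dotProduct_comm v] using mul_sq_le_dotProduct_Smat_mulVec hp.1 hxhat v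
  nlinarith [sq_nonneg (xhat ⬝ᵥ v)]
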